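/- Single-letter converse inequalities under full cooperation (steps in the converse of Theorem 3). Let ((X_j,Y_j))_{j=1}^n be i.i.d. copies of a pair (X,Y) of finite-valued random variables, let f : 𝒳×𝒴 → ℱ, let C_0 = φ_0(X_1^n), C_X = φ_X(X_1^n), C_Y = φ_Y(C_0, Y_1^n) for arbitrary functions φ_0, φ_X, φ_Y with finite codomains, and suppose H(f(X_1,Y_1),…,f(X_n,Y_n) | C_X, C_Y) ≤ ε. For i ∈ {1,…,n} define T_i = (f(X_{i+1},Y_{i+1}),…,f(X_n,Y_n), C_X). Then: (i) T_i−X_i−Y_i is a Markov chain for every i; (ii) H(C_Y) ≥ Σ_{i=1}^n H(f(X_i,Y_i) | T_i) − ε; (iii) H(C_X, C_Y) ≥ Σ_{i=1}^n [ H(f(X_i,Y_i)) + I(X_i; T_i | f(X_i,Y_i)) ] − ε. -/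

import Mathlib

open scoped BigOperators Classical

section Preliminaries

variable {Ω : Type*} [Fintype Ω]

/-- The probability mass function of the random variable `X : Ω → α` under the
weight function `μ` on the finite sample space `Ω`. -/
noncomputable def pm {α : Type*} (μ : Ω → ℝ) (X : Ω → α) (a : α) : ℝ :=
  ∑ ω, if X ω = a then μ ω else 0

/-- `μ` is a probability mass function on the finite sample space `Ω`. -/
def IsPMF (μ : Ω → ℝ) : Prop := (∀ ω, 0 ≤ μ ω) ∧ ∑ ω, μ ω = 1

/-- Shannon entropy (in bits) of the random variable `X` under `μ`. -/
noncomputable def ent {α : Type*} [Fintype α] (μ : Ω → ℝ) (X : Ω → α) : ℝ :=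
  - ∑ a, pm μ X a * Real.logb 2 (pm μ X a)

/-- Conditional Shannon entropy H(X|Y) (in bits). -/
noncomputable def condEnt {α β : Type*} [Fintype α] [Fintype β] (μ : Ω → ℝ)
    (X : Ω → α) (Y : Ω → β) : ℝ :=
  ent μ (fun ω => (X ω, Y ω)) - ent μ Y

/-- Mutual information I(X;Y) (in bits). -/
noncomputable def mi {α β : Type*} [Fintype α] [Fintype β] (μ : Ω → ℝ)
    (X : Ω → α) (Y : Ω → β) : ℝ :=
  ent μ X + ent μ Y - ent μ (fun ω => (X ω, Y ω))

/-- Conditional mutual information I(X;Y|Z) (in bits). -/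
noncomputable def condMI {α β γ : Type*} [Fintype α] [Fintype β] [Fintype γ] (μ : Ω → ℝ)
    (X : Ω → α) (Y : Ω → β) (Z : Ω → γ) : ℝ :=
  condEnt μ X Z - condEnt μ X (fun ω => (Y ω, Z ω))

/-- `A` and `C` are conditionally independent given `B`
(the Markov chain A − B − C). -/
def CondIndepRV {α β γ : Type*} (μ : Ω → ℝ) (A : Ω → α) (B : Ω → β) (C : Ω → γ) : Prop :=
  ∀ a b c, pm μ (fun ω => (A ω, B ω, C ω)) (a, b, c) * pm μ B b
    = pm μ (fun ω => (A ω, B ω)) (a, b) * pm μ (fun ω => (B ω, C ω)) (b, c)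

/-- The conditional characteristic graph `G_{L|K}(f)` of `L` given `K`, with respect to
the source variable `S` and the function `f`: vertices `l₁ ≠ l₂` are adjacent iff there
are `k, s₁, s₂` with `p(l₁,k,s₁) ⬝ p(l₂,k,s₂) > 0` and `f s₁ ≠ f s₂`. -/
def charGraph {α β σ γ : Type*} (μ : Ω → ℝ) (L : Ω → α) (K : Ω → β) (S : Ω → σ)
    (f : σ → γ) : SimpleGraph α where
  Adj l₁ l₂ := l₁ ≠ l₂ ∧ ∃ k s₁ s₂,
    0 < pm μ (fun ω => (L ω, K ω, S ω)) (l₁, k, s₁) ∧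
    0 < pm μ (fun ω => (L ω, K ω, S ω)) (l₂, k, s₂) ∧ f s₁ ≠ f s₂
  symm := ⟨by
    rintro l₁ l₂ ⟨h, k, s₁, s₂, h1, h2, hf⟩
    exact ⟨h.symm, k, s₂, s₁, h2, h1, hf.symm⟩⟩
  loopless := ⟨by rintro l ⟨h, -⟩; exact h rfl⟩

/-- A finite set of vertices is an independent set of the graph `G`. -/
def IsIndepSet {α : Type*} (G : SimpleGraph α) (s : Finset α) : Prop :=
  ∀ a ∈ s, ∀ b ∈ s, ¬ G.Adj a b

end Preliminaries

section Operational

variable {𝒳 𝒴 ℱ : Type*} [Fintype 𝒳] [Fintype 𝒴] [Fintype ℱ]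

/-- Number of messages available at block length `n` and rate `R`: `⌈2^{nR}⌉`. -/
noncomputable def msgCount (n : ℕ) (R : ℝ) : ℕ := ⌈(2 : ℝ) ^ ((n : ℝ) * R)⌉₊

/-- The i.i.d. product distribution of `n` copies of a source with pmf `p`. -/
noncomputable def prodPMF (p : 𝒳 × 𝒴 → ℝ) (n : ℕ) : (Fin n → 𝒳 × 𝒴) → ℝ :=
  fun ω => ∏ j, p (ω j)

/-- The error probability of a code `(φ0, φX, φY, ψ)` for computing `f` on `n`
i.i.d. copies of a source with pmf `p`. -/
noncomputable def errProb (p : 𝒳 × 𝒴 → ℝ) (f : 𝒳 × 𝒴 → ℱ) {n M0 MX MY : ℕ}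
    (φ0 : (Fin n → 𝒳) → Fin M0) (φX : (Fin n → 𝒳) → Fin MX)
    (φY : (Fin n → 𝒴) → Fin M0 → Fin MY)
    (ψ : Fin MX → Fin MY → Fin n → ℱ) : ℝ :=
  ∑ xy : Fin n → 𝒳 × 𝒴,
    if ψ (φX fun i => (xy i).1) (φY (fun i => (xy i).2) (φ0 fun i => (xy i).1))
        = fun i => f (xy i)
    then 0 else prodPMF p n xy

/-- A rate tuple `(R0, RX, RY)` is achievable for computing `f` at the receiver. -/
def Achievable (p : 𝒳 × 𝒴 → ℝ) (f : 𝒳 × 𝒴 → ℱ) (R0 RX RY : ℝ) : Prop :=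
  0 ≤ R0 ∧ 0 ≤ RX ∧ 0 ≤ RY ∧
  ∀ ε > (0 : ℝ), ∃ N : ℕ, ∀ n ≥ N,
    ∃ (φ0 : (Fin n → 𝒳) → Fin (msgCount n R0))
      (φX : (Fin n → 𝒳) → Fin (msgCount n RX))
      (φY : (Fin n → 𝒴) → Fin (msgCount n R0) → Fin (msgCount n RY))
      (ψ : Fin (msgCount n RX) → Fin (msgCount n RY) → Fin n → ℱ),
      errProb p f φ0 φX φY ψ ≤ ε

/-- The rate region: the closure of the set of achievable rate tuples. -/
noncomputable def rateRegion (p : 𝒳 × 𝒴 → ℝ) (f : 𝒳 × 𝒴 → ℱ) : Set (ℝ × ℝ × ℝ) :=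
  closure {r : ℝ × ℝ × ℝ | Achievable p f r.1 r.2.1 r.2.2}

end Operational


/-!
Entropies are handled as expectations `H(V) = -∑ ω, μ ω * log p_V(V ω)` over the sample space,
so that monotonicity under functions, additivity under independence and Gibbs' inequality (which
gives strong subadditivity) are all pointwise statements in `ω`.

(i) `T_i` is computed from `X_i` and the coordinates `j ≠ i`, which are independent of
`(X_i, Y_i)`. (ii) By the chain rule `∑ H(F_i | T_i) = H(F^n | C_X) ≤ H(C_Y) + H(F^n | C_X, C_Y)`.
(iii) By independence `∑ H(X_i, F_i) = H(X^n, F^n) ≤ H(C_X, C_Y) + H(F^n | C_X, C_Y) +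
H(X^n | F^n, C_X)`, and by the chain rule the last term is
`∑ H(X_i | X_{>i}, F^n, C_X) ≤ ∑ H(X_i | T_i, F_i)`.
-/

section Entropy

variable {Ω α β γ : Type*} [Fintype Ω] {μ : Ω → ℝ}

lemma pm_eq_sum_mul_ite (μ : Ω → ℝ) (X : Ω → α) (a : α) :
    pm μ X a = ∑ ω, μ ω * if X ω = a then 1 else 0 := by
  simp only [pm, mul_ite, mul_one, mul_zero]

lemma sum_pm_mul [Fintype α] (μ : Ω → ℝ) (X : Ω → α) (h : α → ℝ) :
    ∑ a, pm μ X a * h a = ∑ ω, μ ω * h (X ω) := by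
  simp only [pm, Finset.sum_mul, ite_mul, zero_mul]
  rw [Finset.sum_comm]
  simp

lemma sum_pm_pair_left [Fintype β] (μ : Ω → ℝ) (Y : Ω → β) (Z : Ω → γ) (c : γ) :
    ∑ b, pm μ (fun ω => (Y ω, Z ω)) (b, c) = pm μ Z c := by
  simp only [pm, Prod.mk.injEq, ite_and]
  rw [Finset.sum_comm]
  simp

lemma ent_eq_sum [Fintype α] (μ : Ω → ℝ) (X : Ω → α) :
    ent μ X = -∑ ω, μ ω * Real.logb 2 (pm μ X (X ω)) := by
  rw [ent, sum_pm_mul μ X fun a => Real.logb 2 (pm μ X a)]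

lemma ent_eq_sum_log [Fintype α] (μ : Ω → ℝ) (X : Ω → α) :
    ent μ X = -(∑ ω, μ ω * Real.log (pm μ X (X ω))) / Real.log 2 := by
  simp only [ent_eq_sum, Real.logb, mul_div_assoc', ← Finset.sum_div, neg_div]

lemma pm_nonneg (hμ : ∀ ω, 0 ≤ μ ω) (X : Ω → α) (a : α) : 0 ≤ pm μ X a :=
  Finset.sum_nonneg fun ω _ => by split_ifs <;> simp [hμ]

lemma le_pm_self (hμ : ∀ ω, 0 ≤ μ ω) (X : Ω → α) (ω : Ω) : μ ω ≤ pm μ X (X ω) := by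
  simpa [pm] using Finset.single_le_sum (f := fun ω' => if X ω' = X ω then μ ω' else 0)
    (fun ω' _ => by split_ifs <;> simp [hμ]) (Finset.mem_univ ω)

lemma pm_self_pos (hμ : ∀ ω, 0 ≤ μ ω) (X : Ω → α) {ω : Ω} (hω : μ ω ≠ 0) :
    0 < pm μ X (X ω) :=
  (lt_of_le_of_ne (hμ ω) (Ne.symm hω)).trans_le (le_pm_self hμ X ω)

lemma sum_mul_congr {f g : Ω → ℝ} (h : ∀ ω, μ ω ≠ 0 → f ω = g ω) :
    ∑ ω, μ ω * f ω = ∑ ω, μ ω * g ω :=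
  Finset.sum_congr rfl fun ω _ => by
    by_cases hω : μ ω = 0
    · simp [hω]
    · rw [h ω hω]

lemma ent_congr [Fintype α] [Fintype β] {X : Ω → α} {Y : Ω → β}
    (h : ∀ ω ω', X ω' = X ω ↔ Y ω' = Y ω) : ent μ X = ent μ Y := by
  simp only [ent_eq_sum, pm]
  congr 2 with ω
  congr 2
  exact Finset.sum_congr rfl fun ω' _ => if_congr (h ω ω') rfl rfl

lemma ent_le_ent_of_determined [Fintype α] [Fintype β] (hμ : ∀ ω, 0 ≤ μ ω) {X : Ω → α}
    {Y : Ω → β} (h : ∀ ω ω', Y ω' = Y ω → X ω' = X ω) : ent μ X ≤ ent μ Y := by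
  simp only [ent_eq_sum, neg_le_neg_iff]
  refine Finset.sum_le_sum fun ω _ => ?_
  rcases (hμ ω).eq_or_lt with hω | hω
  · simp [← hω]
  refine mul_le_mul_of_nonneg_left ?_ hω.le
  refine Real.logb_le_logb_of_le one_lt_two (pm_self_pos hμ Y hω.ne') ?_
  exact Finset.sum_le_sum fun ω' _ => by
    by_cases hY : Y ω' = Y ω
    · simp [hY, h ω ω' hY]
    · simp only [hY, if_false]; split_ifs <;> simp [hμ]

lemma ent_const [Fintype α] (hμ : IsPMF μ) (c : α) : ent μ (fun _ => c) = 0 := by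
  simp [ent_eq_sum, pm, hμ.2]

lemma ent_pair_of_indep [Fintype α] [Fintype β] (hμ : ∀ ω, 0 ≤ μ ω) (X : Ω → α) (Y : Ω → β)
    (hXY : ∀ a b, pm μ (fun ω => (X ω, Y ω)) (a, b) = pm μ X a * pm μ Y b) :
    ent μ (fun ω => (X ω, Y ω)) = ent μ X + ent μ Y := by
  simp only [ent_eq_sum, hXY, ← neg_add, ← Finset.sum_add_distrib, ← mul_add]
  congr 1
  exact sum_mul_congr fun ω hω =>
    Real.logb_mul (pm_self_pos hμ X hω).ne' (pm_self_pos hμ Y hω).ne'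

lemma ent_add_condMI [Fintype α] [Fintype β] [Fintype γ] (μ : Ω → ℝ) (X : Ω → α) (Y : Ω → β)
    (Z : Ω → γ) :
    ent μ Z + condMI μ X Y Z =
      ent μ (fun ω => (X ω, Z ω)) - condEnt μ X (fun ω => (Y ω, Z ω)) := by
  simp only [condMI, condEnt]
  ring

end Entropy

section StrongSubadditivity

variable {Ω α β γ : Type*} [Fintype Ω] [Fintype α] [Fintype β] [Fintype γ] {μ : Ω → ℝ}

lemma sum_mul_log_nonpos {w q : Ω → ℝ} (hw : ∀ ω, 0 ≤ w ω) (hq : ∀ ω, 0 < w ω → 0 < q ω)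
    (hsum : ∑ ω, w ω * q ω ≤ ∑ ω, w ω) : ∑ ω, w ω * Real.log (q ω) ≤ 0 :=
  calc ∑ ω, w ω * Real.log (q ω) ≤ ∑ ω, w ω * (q ω - 1) := Finset.sum_le_sum fun ω _ => by
        rcases (hw ω).eq_or_lt with h | h
        · simp [← h]
        · exact mul_le_mul_of_nonneg_left (Real.log_le_sub_one_of_pos (hq ω h)) h.le
    _ ≤ 0 := by simp only [mul_sub, mul_one, Finset.sum_sub_distrib]; linarith

lemma sum_mul_div_pm_le (X : Ω → α) {h : α → ℝ} (hh : ∀ a, 0 ≤ h a) :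
    ∑ ω, μ ω * (h (X ω) / pm μ X (X ω)) ≤ ∑ a, h a := by
  rw [← sum_pm_mul μ X fun a => h a / pm μ X a]
  refine Finset.sum_le_sum fun a _ => ?_
  by_cases h0 : pm μ X a = 0
  · simp [h0, hh]
  · rw [mul_div_cancel₀ _ h0]

lemma sum_pm_mul_pm_div_pm_le (hμ : ∀ ω, 0 ≤ μ ω) (X : Ω → α) (Y : Ω → β) (Z : Ω → γ) :
    ∑ t : α × β × γ, pm μ (fun ω => (X ω, Z ω)) (t.1, t.2.2) *
      pm μ (fun ω => (Y ω, Z ω)) t.2 / pm μ Z t.2.2 ≤ ∑ ω, μ ω :=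
  calc _ = ∑ ac : α × γ, pm μ (fun ω => (X ω, Z ω)) ac * (pm μ Z ac.2 / pm μ Z ac.2) := by
        simp only [Fintype.sum_prod_type]
        refine Finset.sum_congr rfl fun a _ => ?_
        rw [Finset.sum_comm]
        refine Finset.sum_congr rfl fun c _ => ?_
        rw [← Finset.sum_div, ← Finset.mul_sum, sum_pm_pair_left, mul_div_assoc]
    _ = ∑ ω, μ ω * (pm μ Z (Z ω) / pm μ Z (Z ω)) := sum_pm_mul μ _ _
    _ ≤ ∑ ω, μ ω := Finset.sum_le_sum fun ω _ =>
        mul_le_of_le_one_right (hμ ω) (div_self_le_one _)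

/-- Gibbs' inequality for `q = p(x,z) p(y,z) / (p(z) p(x,y,z))`, whose expectation is at most 1. -/
theorem ent_triple_add_ent_le (hμ : ∀ ω, 0 ≤ μ ω) (X : Ω → α) (Y : Ω → β) (Z : Ω → γ) :
    ent μ (fun ω => (X ω, Y ω, Z ω)) + ent μ Z ≤
      ent μ (fun ω => (X ω, Z ω)) + ent μ (fun ω => (Y ω, Z ω)) := by
  have hsum := (sum_mul_div_pm_le (μ := μ) (fun ω => (X ω, Y ω, Z ω))
    (h := fun t => pm μ (fun ω => (X ω, Z ω)) (t.1, t.2.2) *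
      pm μ (fun ω => (Y ω, Z ω)) t.2 / pm μ Z t.2.2) fun t =>
      div_nonneg (mul_nonneg (pm_nonneg hμ _ _) (pm_nonneg hμ _ _)) (pm_nonneg hμ _ _)).trans
    (sum_pm_mul_pm_div_pm_le hμ X Y Z)
  have hlog := sum_mul_log_nonpos hμ (fun ω hω => div_pos (div_pos (mul_pos
    (pm_self_pos hμ (fun ω => (X ω, Z ω)) hω.ne') (pm_self_pos hμ (fun ω => (Y ω, Z ω)) hω.ne'))
    (pm_self_pos hμ Z hω.ne')) (pm_self_pos hμ (fun ω => (X ω, Y ω, Z ω)) hω.ne')) hsum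
  rw [sum_mul_congr fun ω hω => by
    have hXZ := pm_self_pos hμ (fun ω => (X ω, Z ω)) hω
    have hYZ := pm_self_pos hμ (fun ω => (Y ω, Z ω)) hω
    have hZ := pm_self_pos hμ Z hω
    have hXYZ := pm_self_pos hμ (fun ω => (X ω, Y ω, Z ω)) hω
    beta_reduce at hXZ hYZ hXYZ
    rw [Real.log_div (by positivity) hXYZ.ne', Real.log_div (by positivity) hZ.ne',
      Real.log_mul hXZ.ne' hYZ.ne']] at hlog
  simp only [mul_sub, mul_add, Finset.sum_sub_distrib, Finset.sum_add_distrib] at hlog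
  simp only [ent_eq_sum_log, ← add_div]
  rw [div_le_div_iff_of_pos_right (Real.log_pos one_lt_two)]
  linarith

lemma condEnt_le_condEnt_of_determined (hμ : ∀ ω, 0 ≤ μ ω) (A : Ω → α) {B : Ω → β}
    {C : Ω → γ} (h : ∀ ω ω', B ω' = B ω → C ω' = C ω) : condEnt μ A B ≤ condEnt μ A C := by
  have hABC : ent μ (fun ω => (A ω, B ω, C ω)) = ent μ (fun ω => (A ω, B ω)) :=
    ent_congr fun ω ω' => by
      simp only [Prod.mk.injEq]
      exact ⟨fun h' => ⟨h'.1, h'.2.1⟩, fun h' => ⟨h'.1, h'.2, h ω ω' h'.2⟩⟩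
  have hBC : ent μ (fun ω => (B ω, C ω)) = ent μ B :=
    ent_congr fun ω ω' => by
      simp only [Prod.mk.injEq]
      exact ⟨And.left, fun h' => ⟨h', h ω ω' h'⟩⟩
  have := ent_triple_add_ent_le hμ A B C
  simp only [condEnt]
  linarith

lemma condEnt_le_ent (hμ : IsPMF μ) (A : Ω → α) (B : Ω → β) : condEnt μ A B ≤ ent μ A := by
  have h := condEnt_le_condEnt_of_determined hμ.1 A (B := B) (C := fun _ => ())
    fun _ _ _ => rfl
  have hA : ent μ (fun ω => (A ω, ())) = ent μ A := ent_congr fun ω ω' => by simp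
  unfold condEnt at h ⊢
  rwa [ent_const hμ, sub_zero, hA] at h

end StrongSubadditivity

section ChainRule

variable {Ω α γ : Type*} [Fintype Ω] [Fintype α] [Fintype γ] {n : ℕ}

theorem ent_pair_eq_sum_condEnt (μ : Ω → ℝ) (X : Ω → Fin n → α) (Z : Ω → γ) :
    ent μ (fun ω => (X ω, Z ω)) =
      ∑ i : Fin n, condEnt μ (fun ω => X ω i)
        (fun ω => (fun j : {j : Fin n // i < j} => X ω j, Z ω)) + ent μ Z := by
  let V : ℕ → ℝ := fun k =>
    ent μ fun ω => (fun j : {j : Fin n // k ≤ (j : ℕ)} => X ω j, Z ω)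
  -- `V (i + 1)` is literally the entropy of the condition: `i < j` unfolds to `i + 1 ≤ j`.
  have hstep : ∀ i : Fin n, condEnt μ (fun ω => X ω i)
      (fun ω => (fun j : {j : Fin n // i < j} => X ω j, Z ω)) = V i - V (i + 1) := by
    intro i
    rw [condEnt]
    congr 1
    refine ent_congr fun ω ω' => ?_
    simp only [Prod.mk.injEq, funext_iff, Subtype.forall, Fin.val_fin_le]
    constructor
    · rintro ⟨hi, h, hZ⟩
      refine ⟨fun j hj => ?_, hZ⟩
      rcases hj.eq_or_lt with rfl | hj
      exacts [hi, h j hj]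
    · rintro ⟨h, hZ⟩
      exact ⟨h i le_rfl, fun j hj => h j hj.le, hZ⟩
  have h0 : V 0 = ent μ (fun ω => (X ω, Z ω)) :=
    ent_congr fun ω ω' => by simp [funext_iff]
  have hn : V n = ent μ Z :=
    ent_congr fun ω ω' => by simp [funext_iff, (Fin.is_lt _).not_ge]
  rw [Finset.sum_congr rfl fun i _ => hstep i,
    Fin.sum_univ_eq_sum_range (fun k => V k - V (k + 1)), Finset.sum_range_sub', h0, hn]
  ring

end ChainRule

section Independence

variable {Ω ι κ α β γ ρ : Type*} [Fintype Ω] [Fintype ι] [DecidableEq ι] [Fintype κ]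
  {μ : Ω → ℝ} {p : κ → ℝ}

lemma IsPMF.pi (hp : IsPMF p) : IsPMF fun ω : ι → κ => ∏ j, p (ω j) :=
  ⟨fun ω => Finset.prod_nonneg fun j _ => hp.1 _, by rw [← Fintype.prod_sum]; simp [hp.2]⟩

lemma sum_prod_mul_eval_mul_restrict (p : κ → ℝ) (i : ι) (F : κ → ℝ)
    (G : ({j // j ≠ i} → κ) → ℝ) :
    ∑ ω : ι → κ, (∏ j, p (ω j)) * (F (ω i) * G fun j => ω j) =
      (∑ x, p x * F x) * ∑ r : {j // j ≠ i} → κ, (∏ j, p (r j)) * G r := by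
  rw [Finset.sum_mul_sum, ← Fintype.sum_prod_type', ← (Equiv.piSplitAt i fun _ => κ).sum_comp]
  refine Finset.sum_congr rfl fun ω _ => ?_
  rw [Fintype.prod_eq_mul_prod_subtype_ne _ i]
  simp only [Equiv.piSplitAt_apply]
  ring

lemma pm_pair_eq_mul_of_iid (hp : ∑ x, p x = 1) (i : ι) (A : κ → α)
    (B : ({j // j ≠ i} → κ) → β) (a : α) (b : β) :
    pm (fun ω : ι → κ => ∏ j, p (ω j)) (fun ω => (A (ω i), B fun j => ω j)) (a, b) =
      pm (fun ω : ι → κ => ∏ j, p (ω j)) (fun ω => A (ω i)) a *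
        pm (fun ω : ι → κ => ∏ j, p (ω j)) (fun ω => B fun j => ω j) b := by
  have hr : ∑ r : {j // j ≠ i} → κ, ∏ j, p (r j) = 1 := by
    rw [← Fintype.prod_sum]; simp [hp]
  have hA := sum_prod_mul_eval_mul_restrict p i (fun x => if A x = a then 1 else 0) fun _ => 1
  have hB := sum_prod_mul_eval_mul_restrict p i (fun _ => 1) fun r => if B r = b then 1 else 0
  have hAB := sum_prod_mul_eval_mul_restrict p i (fun x => if A x = a then 1 else 0)
    fun r => if B r = b then 1 else 0
  simp only [mul_one, one_mul, hr, hp] at hA hB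
  simp only [pm_eq_sum_mul_ite, Prod.mk.injEq]
  rw [hA, hB, ← hAB]
  simp only [ite_zero_mul_ite_zero, mul_one]

lemma sum_mul_mul_of_indep [Fintype α] [Fintype β] {U : Ω → α} {R : Ω → β}
    (hUR : ∀ u r, pm μ (fun ω => (U ω, R ω)) (u, r) = pm μ U u * pm μ R r)
    (F : α → ℝ) (G : β → ℝ) :
    ∑ ω, μ ω * (F (U ω) * G (R ω)) = (∑ u, pm μ U u * F u) * ∑ r, pm μ R r * G r := by
  rw [← sum_pm_mul μ (fun ω => (U ω, R ω)) fun ur => F ur.1 * G ur.2, Fintype.sum_prod_type,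
    Finset.sum_mul_sum]
  simp only [hUR]
  exact Finset.sum_congr rfl fun u _ => Finset.sum_congr rfl fun r _ => by ring

theorem condIndepRV_of_indep [Fintype β] [Fintype γ] [Fintype ρ] (τ : β → ρ → α)
    (B : Ω → β) (C : Ω → γ) (R : Ω → ρ)
    (hind : ∀ bc r, pm μ (fun ω => ((B ω, C ω), R ω)) (bc, r) =
      pm μ (fun ω => (B ω, C ω)) bc * pm μ R r) :
    CondIndepRV μ (fun ω => τ (B ω) (R ω)) B C := by
  intro t b c
  have hTBC : pm μ (fun ω => (τ (B ω) (R ω), B ω, C ω)) (t, b, c) =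
      (∑ u, pm μ (fun ω => (B ω, C ω)) u * if u = (b, c) then 1 else 0) *
        ∑ r, pm μ R r * if τ b r = t then 1 else 0 := by
    rw [← sum_mul_mul_of_indep hind, pm_eq_sum_mul_ite]
    refine Finset.sum_congr rfl fun ω _ => congrArg _ ?_
    by_cases hB : B ω = b <;> by_cases hC : C ω = c <;> simp [hB, hC]
  have hTB : pm μ (fun ω => (τ (B ω) (R ω), B ω)) (t, b) =
      (∑ u, pm μ (fun ω => (B ω, C ω)) u * if u.1 = b then 1 else 0) *
        ∑ r, pm μ R r * if τ b r = t then 1 else 0 := by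
    rw [← sum_mul_mul_of_indep hind, pm_eq_sum_mul_ite]
    refine Finset.sum_congr rfl fun ω _ => congrArg _ ?_
    by_cases hB : B ω = b <;> simp [hB]
  rw [hTBC, hTB, sum_pm_mul μ (fun ω => (B ω, C ω)) fun u => if u.1 = b then 1 else 0,
    ← pm_eq_sum_mul_ite μ B b]
  simp only [mul_ite, mul_one, mul_zero, Finset.sum_ite_eq', Finset.mem_univ, if_true]
  ring

theorem condIndepRV_fst_snd_of_iid {𝒳 𝒴 : Type*} [Fintype 𝒳] [Fintype 𝒴] {p : 𝒳 × 𝒴 → ℝ}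
    (hp : ∑ x, p x = 1) (i : ι)
    (S : (ι → 𝒳) → ({j // j ≠ i} → 𝒳 × 𝒴) → α) :
    CondIndepRV (fun ω : ι → 𝒳 × 𝒴 => ∏ j, p (ω j)) (fun ω => S (fun j => (ω j).1) fun j => ω j)
      (fun ω => (ω i).1) (fun ω => (ω i).2) := by
  let τ : 𝒳 → ({j // j ≠ i} → 𝒳 × 𝒴) → α :=
    fun x r => S (fun j => if h : j = i then x else (r ⟨j, h⟩).1) r
  have hS : (fun ω : ι → 𝒳 × 𝒴 => S (fun j => (ω j).1) fun j => ω j) =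
      fun ω => τ (ω i).1 fun j => ω j :=
    funext fun ω => congrArg₂ S (funext fun j => by by_cases h : j = i <;> simp [h]) rfl
  rw [hS]
  exact condIndepRV_of_indep τ _ _ _ fun bc r =>
    pm_pair_eq_mul_of_iid hp i (fun x => (x.1, x.2)) (fun r => r) bc r

theorem ent_eq_sum_ent_of_iid [Fintype α] {n : ℕ} (hp : IsPMF p) (g : κ → α) :
    ent (fun ω : Fin n → κ => ∏ j, p (ω j)) (fun ω j => g (ω j)) =
      ∑ i, ent (fun ω : Fin n → κ => ∏ j, p (ω j)) (fun ω => g (ω i)) := by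
  have hμ : IsPMF fun ω : Fin n → κ => ∏ j, p (ω j) := hp.pi
  have h := ent_pair_eq_sum_condEnt (fun ω : Fin n → κ => ∏ j, p (ω j))
    (fun ω j => g (ω j)) fun _ => ()
  rw [ent_const hμ, add_zero, ent_congr (Y := fun ω j => g (ω j)) (by simp)] at h
  rw [h]
  refine Finset.sum_congr rfl fun i _ => ?_
  rw [condEnt, ent_pair_of_indep hμ.1 _ _ fun a b => pm_pair_eq_mul_of_iid hp.2 i g
    (fun r => (fun j : {j : Fin n // i < j} => g (r ⟨j, j.2.ne'⟩), ())) a b]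
  ring

end Independence

section Converse

variable {Ω α β γ δ : Type*} [Fintype Ω] [Fintype α] [Fintype β] [Fintype γ] [Fintype δ]
  {μ : Ω → ℝ} {n : ℕ}

theorem sum_condEnt_le_ent_add_condEnt (hμ : IsPMF μ) (F : Ω → Fin n → β) (CX : Ω → γ)
    (CY : Ω → δ) :
    ∑ i, condEnt μ (fun ω => F ω i) (fun ω => (fun j : {j : Fin n // i < j} => F ω j, CX ω)) ≤
      ent μ CY + condEnt μ F (fun ω => (CX ω, CY ω)) := by
  have hchain := ent_pair_eq_sum_condEnt μ F CX
  have hmono : ent μ (fun ω => (F ω, CX ω)) ≤ ent μ (fun ω => (F ω, CX ω, CY ω)) :=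
    ent_le_ent_of_determined hμ.1 fun ω ω' h => by simp_all
  have hsub := condEnt_le_ent hμ CX CY
  simp only [condEnt] at hchain hsub ⊢
  linarith

theorem ent_le_ent_add_condEnt_add_sum_condEnt (hμ : ∀ ω, 0 ≤ μ ω) (A : Ω → Fin n → α)
    (F : Ω → Fin n → β) (CX : Ω → γ) (CY : Ω → δ) :
    ent μ (fun ω j => (A ω j, F ω j)) ≤
      ent μ (fun ω => (CX ω, CY ω)) + condEnt μ F (fun ω => (CX ω, CY ω)) +
        ∑ i, condEnt μ (fun ω => A ω i)
          (fun ω => ((fun j : {j : Fin n // i < j} => F ω j, CX ω), F ω i)) := by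
  have hmono : ent μ (fun ω j => (A ω j, F ω j)) ≤ ent μ (fun ω => (A ω, F ω, CX ω, CY ω)) :=
    ent_le_ent_of_determined hμ fun ω ω' h => by simp_all
  have hcond : condEnt μ A (fun ω => (F ω, CX ω, CY ω)) ≤ condEnt μ A (fun ω => (F ω, CX ω)) :=
    condEnt_le_condEnt_of_determined hμ A fun ω ω' h => by simp_all
  have hchain := ent_pair_eq_sum_condEnt μ A fun ω => (F ω, CX ω)
  have hsum := Finset.sum_le_sum fun i (_ : i ∈ Finset.univ) =>
    condEnt_le_condEnt_of_determined hμ (fun ω => A ω i)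
      (B := fun ω => (fun j : {j : Fin n // i < j} => A ω j, F ω, CX ω))
      (C := fun ω => ((fun j : {j : Fin n // i < j} => F ω j, CX ω), F ω i))
      fun ω ω' h => by simp_all
  simp only [condEnt] at hcond hchain hsum ⊢
  linarith

end Converse

/-- **Steps in the converse of Theorem 3 (full cooperation).** With
`C_0 = φ_0(X^n)`, `C_X = φ_X(X^n)`, `C_Y = φ_Y(C_0, Y^n)` computed from `n` i.i.d.
copies of `(X,Y)`, if `H(f(X_1,Y_1),…,f(X_n,Y_n) | C_X, C_Y) ≤ ε` then, with
`T_i = (f(X_{i+1},Y_{i+1}),…,f(X_n,Y_n), C_X)`: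
(i) `T_i − X_i − Y_i` is a Markov chain for every `i`;
(ii) `H(C_Y) ≥ Σ_i H(f(X_i,Y_i) | T_i) − ε`;
(iii) `H(C_X,C_Y) ≥ Σ_i [H(f(X_i,Y_i)) + I(X_i; T_i | f(X_i,Y_i))] − ε`. -/
theorem full_cooperation_converse_steps
    {𝒳 𝒴 ℱ 𝒞0 𝒞X 𝒞Y : Type*}
    [Fintype 𝒳] [Fintype 𝒴] [Fintype ℱ] [Fintype 𝒞0] [Fintype 𝒞X] [Fintype 𝒞Y]
    (p : 𝒳 × 𝒴 → ℝ) (hp : IsPMF p) (f : 𝒳 × 𝒴 → ℱ) (n : ℕ)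
    (φ0 : (Fin n → 𝒳) → 𝒞0) (φX : (Fin n → 𝒳) → 𝒞X) (φY : 𝒞0 × (Fin n → 𝒴) → 𝒞Y)
    (ε : ℝ)
    (hfano : condEnt (prodPMF p n) (fun ω => fun j => f (ω j))
      (fun ω => (φX fun j => (ω j).1,
        φY (φ0 fun j => (ω j).1, fun j => (ω j).2))) ≤ ε) :
    (∀ i : Fin n, CondIndepRV (prodPMF p n)
        (fun ω => (fun j : {j : Fin n // i < j} => f (ω j.1), φX fun j => (ω j).1))
        (fun ω => (ω i).1) (fun ω => (ω i).2)) ∧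
    ent (prodPMF p n) (fun ω => φY (φ0 fun j => (ω j).1, fun j => (ω j).2))
        ≥ (∑ i : Fin n, condEnt (prodPMF p n) (fun ω => f (ω i))
            (fun ω => (fun j : {j : Fin n // i < j} => f (ω j.1),
              φX fun j => (ω j).1))) - ε ∧
    ent (prodPMF p n) (fun ω => (φX fun j => (ω j).1,
        φY (φ0 fun j => (ω j).1, fun j => (ω j).2)))
      ≥ (∑ i : Fin n, (ent (prodPMF p n) (fun ω => f (ω i))
          + condMI (prodPMF p n) (fun ω => (ω i).1)
            (fun ω => (fun j : {j : Fin n // i < j} => f (ω j.1),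
              φX fun j => (ω j).1))
            (fun ω => f (ω i)))) - ε := by
  have hμ : IsPMF (prodPMF p n) := hp.pi
  let CX := fun ω : Fin n → 𝒳 × 𝒴 => φX fun j => (ω j).1
  let CY := fun ω : Fin n → 𝒳 × 𝒴 => φY (φ0 fun j => (ω j).1, fun j => (ω j).2)
  refine ⟨fun i => condIndepRV_fst_snd_of_iid hp.2 i fun x r =>
    (fun j : {j : Fin n // i < j} => f (r ⟨j, j.2.ne'⟩), φX x), ?_, ?_⟩
  · have := sum_condEnt_le_ent_add_condEnt hμ (fun ω j => f (ω j)) CX CY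
    linarith
  · have hiid : ent (prodPMF p n) (fun ω j => ((ω j).1, f (ω j))) =
        ∑ i, ent (prodPMF p n) fun ω => ((ω i).1, f (ω i)) :=
      ent_eq_sum_ent_of_iid hp fun x => (x.1, f x)
    have := ent_le_ent_add_condEnt_add_sum_condEnt hμ.1 (fun ω j => (ω j).1)
      (fun ω j => f (ω j)) CX CY
    simp only [ent_add_condMI, Finset.sum_sub_distrib]
    linarith
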